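/- With f_w the compositions of f_0(x)=x^5y, f_0(y)=y^5x, f_1(x)=x^2yxyx, f_1(y)=y^2xyxy on F_2: for any w ∈ 2^{<ℕ} and α, β ∈ F_2, if f_w(α) is a cyclic permutation of f_w(β), then α is a cyclic permutation of β. -/

import Mathlib

/-- `x` and `y`, the generators of `F₂ = FreeGroup Bool` (`x = of false`, `y = of true`). -/
def Fx : FreeGroup Bool := FreeGroup.of false
def Fy : FreeGroup Bool := FreeGroup.of true

/-- `f₀ : x ↦ x⁵y, y ↦ y⁵x`. -/
def F0 : Monoid.End (FreeGroup Bool) :=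
  FreeGroup.lift (fun b => if b then Fy ^ 5 * Fx else Fx ^ 5 * Fy)

/-- `f₁ : x ↦ x²yxyx, y ↦ y²xyxy`. -/
def F1 : Monoid.End (FreeGroup Bool) :=
  FreeGroup.lift (fun b => if b then Fy ^ 2 * Fx * Fy * Fx * Fy
    else Fx ^ 2 * Fy * Fx * Fy * Fx)

/-- `f_w` for `w ∈ 2^{<ℕ}`: the composition of the `f_i` along `w`
(`f_e = id`, `f_{u⌢v} = f_u ∘ f_v`). -/
def Fw (w : List Bool) : Monoid.End (FreeGroup Bool) :=
  (w.map (fun b => if b then F1 else F0)).prod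

/-- The image under `f_w` of a single letter `ℓ ∈ {x^{±1}, y^{±1}}`
(a letter is a pair (generator, sign)). -/
def FwLetter (w : List Bool) (ℓ : Bool × Bool) : FreeGroup Bool :=
  Fw w (FreeGroup.mk [ℓ])

/-- A word is cyclically reduced if its first letter is not the inverse of its last. -/
def CyclicallyReduced (g : FreeGroup Bool) : Prop :=
  ∀ p q : Bool × Bool, g.toWord.head? = some p → g.toWord.getLast? = some q →
    p ≠ (q.1, !q.2)

/-- `h` is a cyclic permutation of `g` if their reduced words are `l₁l₂` and `l₂l₁`. -/
def IsCyclicPerm (g h : FreeGroup Bool) : Prop :=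
  ∃ l₁ l₂ : List (Bool × Bool), g.toWord = l₁ ++ l₂ ∧ h.toWord = l₂ ++ l₁

/-!
Each `f_i` sends a letter to a block of six letters, and adjacent blocks never cancel, so the
reduced word of `f_i(g)` is the concatenation of the blocks of the letters of `g`. The blocks form
a comma-free code: a block never occurs inside a concatenation of two blocks at an offset strictly
between `0` and `6`. So a rotation carrying `f_i(α)` to `f_i(β)` cuts at a block boundary, and
undoing the substitution rotates `α` into `β`. Induct on `w`.
-/

namespace List

variable {α β : Type*}

theorem IsChain.flatMap {R : α → α → Prop} {S : β → β → Prop} {σ : α → List β} {l : List α}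
    (hl : l.IsChain R) (hne : ∀ a, σ a ≠ []) (hσ : ∀ a, (σ a).IsChain S)
    (hjoin : ∀ a b, R a b → ∀ x ∈ (σ a).getLast?, ∀ y ∈ (σ b).head?, S x y) :
    (l.flatMap σ).IsChain S := by
  rw [flatMap_def, isChain_flatten (by simpa using fun a _ => (hne a).symm), isChain_map]
  exact ⟨by simpa using fun a _ => hσ a, hl.imp hjoin⟩

structure IsCommaFreeCode (σ : α → List β) (n : ℕ) : Prop where
  pos : 0 < n
  length_eq : ∀ a, (σ a).length = n
  injective : Function.Injective σ
  not_overlap : ∀ a c d r, 0 < r → r < n → σ d ≠ (σ a).drop r ++ (σ c).take r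

variable {σ : α → List β} {n : ℕ}

theorem rotate_flatMap_mul (hlen : ∀ a, (σ a).length = n) (u : List α) (q : ℕ) :
    (u.flatMap σ).rotate (n * q) = (u.rotate q).flatMap σ := by
  induction q with
  | zero => simp
  | succ q ih =>
    rw [Nat.mul_succ, ← rotate_rotate, ih, ← rotate_rotate u q 1]
    generalize u.rotate q = w
    rcases w with _ | ⟨a, w⟩
    · simp
    · rw [flatMap_cons, ← hlen a, rotate_append_length_eq, rotate_cons_succ, rotate_zero,
        flatMap_append, flatMap_singleton]

theorem flatMap_injective (hn : 0 < n) (hlen : ∀ a, (σ a).length = n)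
    (hinj : Function.Injective σ) : Function.Injective (flatMap σ) := by
  have hne : ∀ a, σ a ≠ [] := fun a => ne_nil_of_length_pos (hlen a ▸ hn)
  intro u
  induction u with
  | nil =>
    rintro (_ | ⟨c, v⟩) h
    · rfl
    · exact absurd (append_eq_nil_iff.mp h.symm).1 (hne c)
  | cons a u ih =>
    rintro (_ | ⟨c, v⟩) h
    · exact absurd (append_eq_nil_iff.mp h).1 (hne a)
    · simp only [flatMap_cons] at h
      obtain ⟨hac, huv⟩ := append_inj h (by rw [hlen, hlen])
      rw [hinj hac, ih huv]

theorem rotate_flatMap_ne_flatMap (hσ : IsCommaFreeCode σ n) {r : ℕ} (hr : 0 < r) (hrn : r < n)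
    {w : List α} (hw : w ≠ []) (v : List α) : (w.flatMap σ).rotate r ≠ v.flatMap σ := by
  obtain ⟨a, w, rfl⟩ := exists_cons_of_ne_nil hw
  have hlen := hσ.length_eq
  intro h
  have hv : v ≠ [] := by
    rintro rfl
    rw [flatMap_nil, rotate_eq_nil_iff, flatMap_cons, append_eq_nil_iff] at h
    have := hlen a
    simp only [h.1, length_nil] at this
    omega
  obtain ⟨d, v, rfl⟩ := exists_cons_of_ne_nil hv
  obtain ⟨c, hc⟩ : ∃ c, (w.flatMap σ ++ (σ a).take r).take r = (σ c).take r := by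
    rcases w with _ | ⟨c, w⟩
    · exact ⟨a, by simp⟩
    · exact ⟨c, by rw [flatMap_cons, append_assoc, take_append_of_le_length (by rw [hlen]; omega)]⟩
  apply hσ.not_overlap a c d r hr hrn
  calc σ d = ((d :: v).flatMap σ).take n := by rw [flatMap_cons, take_left' (hlen d)]
    _ = ((σ a).drop r ++ (w.flatMap σ ++ (σ a).take r)).take n := by
      rw [← h, flatMap_cons, rotate_eq_drop_append_take (by simp [hlen]; omega),
        drop_append_of_le_length (by rw [hlen]; omega),
        take_append_of_le_length (l₁ := σ a) (by rw [hlen]; omega), append_assoc]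
    _ = (σ a).drop r ++ (σ c).take r := by
      rw [take_append, take_of_length_le (by simp [hlen]), length_drop, hlen,
        Nat.sub_sub_self hrn.le, hc]

theorem IsCommaFreeCode.isRotated_of_isRotated_flatMap (hσ : IsCommaFreeCode σ n)
    {u v : List α} (h : u.flatMap σ ~r v.flatMap σ) : u ~r v := by
  obtain ⟨k, hk, hrot⟩ := isRotated_iff_mod.mp h
  rw [← Nat.div_add_mod k n, ← rotate_rotate, rotate_flatMap_mul hσ.length_eq] at hrot
  rcases Nat.eq_zero_or_pos (k % n) with hr | hr
  · rw [hr, rotate_zero] at hrot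
    exact ⟨k / n, flatMap_injective hσ.pos hσ.length_eq hσ.injective hrot⟩
  · have hu : u ≠ [] := by
      rintro rfl
      simp only [flatMap_nil, length_nil, Nat.le_zero] at hk
      simp [hk] at hr
    exact absurd hrot (rotate_flatMap_ne_flatMap hσ hr (Nat.mod_lt _ hσ.pos)
      (by simpa using hu) v)

end List

namespace FreeGroup

theorem toWord_map_eq_flatMap {α β : Type*} [DecidableEq α] [DecidableEq β]
    (φ : FreeGroup α →* FreeGroup β) {σ : α × Bool → List (β × Bool)}
    (hφ : ∀ ℓ, φ (mk [ℓ]) = mk (σ ℓ)) {g : FreeGroup α} (hg : IsReduced (g.toWord.flatMap σ)) :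
    (φ g).toWord = g.toWord.flatMap σ := by
  have hmk : ∀ L, φ (mk L) = mk (L.flatMap σ) := by
    intro L
    induction L with
    | nil => exact _root_.map_one φ
    | cons ℓ L ih =>
      rw [List.flatMap_cons, ← mul_mk, ← hφ, ← ih, ← _root_.map_mul, mul_mk]
      rfl
  conv_lhs => rw [← mk_toWord (x := g), hmk, toWord_mk, hg.reduce_eq]

end FreeGroup

open FreeGroup

def fStep (b : Bool) : Monoid.End (FreeGroup Bool) := if b then F1 else F0

theorem Fw_cons_apply (b : Bool) (w : List Bool) (g : FreeGroup Bool) :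
    Fw (b :: w) g = fStep b (Fw w g) := rfl

def stepGenerators : Bool → Bool → List Bool
  | false, a => [a, a, a, a, a, !a]
  | true, a => [a, a, !a, a, !a, a]

def stepBlock (b : Bool) : Bool × Bool → List (Bool × Bool)
  | (a, true) => (stepGenerators b a).map (·, true)
  | (a, false) => invRev ((stepGenerators b a).map (·, true))

theorem fStep_mk_singleton (b : Bool) (ℓ : Bool × Bool) :
    fStep b (mk [ℓ]) = mk (stepBlock b ℓ) := by
  have hof : ∀ a, fStep b (of a) = mk ((stepGenerators b a).map (·, true)) := by
    intro a
    cases b <;> cases a <;> rfl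
  rcases ℓ with ⟨a, _ | _⟩
  · change fStep b (of a)⁻¹ = _
    rw [_root_.map_inv, hof, inv_mk]
    rfl
  · exact hof a

theorem stepBlock_isCommaFreeCode (b : Bool) : List.IsCommaFreeCode (stepBlock b) 6 where
  pos := by norm_num
  length_eq := by revert b; decide
  injective := by unfold Function.Injective; revert b; decide
  not_overlap := by
    intro a c d r hr hr6
    interval_cases r <;> revert a c d b <;> decide

theorem isReduced_flatMap_stepBlock (b : Bool) {L : List (Bool × Bool)}
    (hL : FreeGroup.IsReduced L) : FreeGroup.IsReduced (L.flatMap (stepBlock b)) :=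
  hL.flatMap (by revert b; decide) (by revert b; decide) (by revert b; decide)

theorem toWord_fStep (b : Bool) (g : FreeGroup Bool) :
    (fStep b g).toWord = g.toWord.flatMap (stepBlock b) :=
  toWord_map_eq_flatMap _ (fStep_mk_singleton b) (isReduced_flatMap_stepBlock b isReduced_toWord)

theorem isCyclicPerm_iff_isRotated {g h : FreeGroup Bool} :
    IsCyclicPerm g h ↔ g.toWord ~r h.toWord := by
  constructor
  · rintro ⟨l₁, l₂, hg, hh⟩
    rw [hg, hh]
    exact List.isRotated_append
  · intro hrot
    obtain ⟨k, hk, hrot⟩ := List.isRotated_iff_mod.mp hrot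
    exact ⟨g.toWord.take k, g.toWord.drop k, (List.take_append_drop k _).symm,
      by rw [← hrot, List.rotate_eq_drop_append_take hk]⟩

theorem isCyclicPerm_of_fStep (b : Bool) {g h : FreeGroup Bool}
    (hb : IsCyclicPerm (fStep b g) (fStep b h)) : IsCyclicPerm g h := by
  rw [isCyclicPerm_iff_isRotated, toWord_fStep, toWord_fStep] at hb
  exact isCyclicPerm_iff_isRotated.2
    ((stepBlock_isCommaFreeCode b).isRotated_of_isRotated_flatMap hb)

theorem Fw_cyclic_perm (w : List Bool) (α β : FreeGroup Bool)
    (h : IsCyclicPerm (Fw w α) (Fw w β)) : IsCyclicPerm α β := by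
  induction w with
  | nil => exact h
  | cons b w ih =>
    rw [Fw_cons_apply, Fw_cons_apply] at h
    exact ih (isCyclicPerm_of_fStep b h)
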